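/- Existence of a Nikodym-type configuration after pigeonholing and rotation: given a full-measure set F₀ ⊆ [-1,1]² with |F₀| = 4, a null set E₀, and a measurable direction function α : F₀ → [0,π) such that the line through w in direction α(w), minus {w}, lies in E₀, there exist k ∈ {0,…,4N−1}, a rotation ρ, a set F = ρ(F̃_k) with |F| ≥ π/(4N), and a null set E = ρ(E₀), such that for every w ∈ F there is a line ℓ(w) through w with direction angle γ(w) ∈ [(1−1/N)π/4, π/4) and ℓ(w) \ {w} ⊆ E. -/

import Mathlib

/-!
The unit disc has area `π` and `F₀` fills `[-1,1]²` up to a null set, so `F₀ ∩ disc` has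
measure `π`. Its `4N` pieces on which `α` lies in a fixed interval of length `π/(4N)` cover it,
so one piece has measure at least `π/(4N)`. A rotation by `β` has determinant `1`, hence
preserves measure, and turns the direction `α` into `α + β`; the choice of `β` moves the `k`-th
interval of directions to `[π/4 - π/(4N), π/4)`.
-/

open MeasureTheory Real Set

theorem measure_inter_eq_of_subset_of_measure_eq {X : Type*} [MeasurableSpace X]
    {μ : Measure X} {s t u : Set X} (hst : s ⊆ t) (h : μ s = μ t) (ht : μ t ≠ ⊤)
    (hu : MeasurableSet u) : μ (s ∩ u) = μ (t ∩ u) := by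
  refine le_antisymm (measure_mono (inter_subset_inter_left _ hst)) ?_
  have hdiff_fin : μ (t \ u) ≠ ⊤ := ((measure_mono sdiff_subset).trans_lt ht.lt_top).ne
  refine (ENNReal.add_le_add_iff_right hdiff_fin).1 ?_
  calc μ (t ∩ u) + μ (t \ u) = μ (s ∩ u) + μ (s \ u) := by
        rw [measure_inter_add_sdiff _ hu, measure_inter_add_sdiff _ hu, h]
    _ ≤ μ (s ∩ u) + μ (t \ u) := by gcongr

theorem exists_measure_div_card_le_of_subset_biUnion {ι X : Type*} [MeasurableSpace X]
    {μ : Measure X} {s : Set X} {S : ι → Set X} {I : Finset ι} (hI : I.Nonempty)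
    (hs : s ⊆ ⋃ i ∈ I, S i) : ∃ i ∈ I, μ s / I.card ≤ μ (S i) := by
  refine ENNReal.exists_le_of_sum_le hI ?_
  calc ∑ _i ∈ I, μ s / I.card = μ s := by
        rw [Finset.sum_const, nsmul_eq_mul,
          ENNReal.mul_div_cancel (by simpa using hI.ne_empty) (ENNReal.natCast_ne_top _)]
    _ ≤ μ (⋃ i ∈ I, S i) := measure_mono hs
    _ ≤ ∑ i ∈ I, μ (S i) := measure_biUnion_finset_le I S

theorem exists_lt_mem_Ico_mul_div {θ a : ℝ} {n : ℕ} (ha : 0 < a) (hn : 0 < n)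
    (hθ : θ ∈ Ico 0 a) : ∃ k < n, θ ∈ Ico (k * a / n) ((k + 1) * a / n) := by
  have hn' : (0 : ℝ) < n := by exact_mod_cast hn
  have ht : 0 ≤ θ * n / a := by have := hθ.1; positivity
  refine ⟨⌊θ * n / a⌋₊, (Nat.floor_lt ht).2 ?_, ?_, ?_⟩
  · rw [div_lt_iff₀ ha]; nlinarith [hθ.2]
  · rw [div_le_iff₀ hn', ← le_div_iff₀ ha]; exact Nat.floor_le ht
  · rw [lt_div_iff₀ hn', ← div_lt_iff₀ ha]; exact Nat.lt_floor_add_one _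

def unitDisk : Set (ℝ × ℝ) := {w | w.1 ^ 2 + w.2 ^ 2 ≤ 1}

theorem measurableSet_unitDisk : MeasurableSet unitDisk :=
  (isClosed_le (by fun_prop) continuous_const).measurableSet

theorem volume_unitDisk : volume unitDisk = ENNReal.ofReal π := by
  have hpre : Complex.measurableEquivRealProd ⁻¹' unitDisk = Metric.closedBall 0 1 := by
    ext z
    rw [mem_preimage, Metric.mem_closedBall, dist_zero_right, ← sq_le_one_iff₀ (norm_nonneg z),
      Complex.sq_norm, Complex.normSq_apply, ← sq, ← sq]
    rfl
  rw [← Complex.volume_preserving_equiv_real_prod.measure_preimage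
    measurableSet_unitDisk.nullMeasurableSet, hpre, Complex.volume_closedBall]
  simp [← NNReal.coe_real_pi, ENNReal.ofReal_coe_nnreal]

theorem unitDisk_subset_Icc : unitDisk ⊆ Icc (-1, -1) (1, 1) := by
  intro w (hw : w.1 ^ 2 + w.2 ^ 2 ≤ 1)
  have h1 : w.1 ^ 2 ≤ 1 := by nlinarith [sq_nonneg w.2]
  have h2 : w.2 ^ 2 ≤ 1 := by nlinarith [sq_nonneg w.1]
  rw [sq_le_one_iff_abs_le_one, abs_le] at h1 h2
  exact ⟨⟨h1.1, h2.1⟩, h1.2, h2.2⟩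

theorem volume_Icc_neg_one_one : volume (Icc ((-1 : ℝ), (-1 : ℝ)) (1, 1)) = 4 := by
  rw [Icc_prod_eq, Measure.volume_eq_prod, Measure.prod_prod, Real.volume_Icc,
    ← ENNReal.ofReal_mul (by norm_num)]
  norm_num

noncomputable def planeRotation (β : ℝ) : ℝ × ℝ →ₗ[ℝ] ℝ × ℝ :=
  Matrix.toLin (Module.Basis.finTwoProd ℝ) (Module.Basis.finTwoProd ℝ)
    !![cos β, -sin β; sin β, cos β]

theorem coe_planeRotation (β : ℝ) :
    ⇑(planeRotation β) = fun w => (w.1 * cos β - w.2 * sin β, w.1 * sin β + w.2 * cos β) := by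
  funext w
  rw [planeRotation, Matrix.toLin_finTwoProd_apply]
  exact Prod.ext (by ring) (by ring)

theorem volume_image_planeRotation (β : ℝ) (s : Set (ℝ × ℝ)) :
    volume (planeRotation β '' s) = volume s := by
  have hdet : LinearMap.det (planeRotation β) = 1 := by
    rw [planeRotation, LinearMap.det_toLin, Matrix.det_fin_two_of]
    linear_combination cos_sq_add_sin_sq β
  rw [Measure.addHaar_image_linearMap, hdet]
  simp

theorem planeRotation_neg_planeRotation (β : ℝ) (w : ℝ × ℝ) :
    planeRotation (-β) (planeRotation β w) = w := by
  simp only [coe_planeRotation, cos_neg, sin_neg]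
  exact Prod.ext (by linear_combination w.1 * sin_sq_add_cos_sq β)
    (by linear_combination w.2 * sin_sq_add_cos_sq β)

theorem planeRotation_cos_sin (β θ : ℝ) :
    planeRotation β (cos θ, sin θ) = (cos (θ + β), sin (θ + β)) := by
  rw [coe_planeRotation, cos_add, sin_add]
  exact Prod.ext (by ring) (by ring)

theorem nikodym_pigeonhole_general (N : ℕ) (hN : 6 ≤ N)
    (F₀ E₀ : Set (ℝ × ℝ)) (hF₀sub : F₀ ⊆ Set.Icc (-1, -1) (1, 1))
    (hF₀meas : volume F₀ = 4) (hE₀ : volume E₀ = 0)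
    (α : ℝ × ℝ → ℝ)
    (hαrange : ∀ w ∈ F₀, α w ∈ Set.Ico 0 π)
    (hline : ∀ w ∈ F₀, ∀ r : ℝ, r ≠ 0 →
      w + r • (Real.cos (α w), Real.sin (α w)) ∈ E₀) :
    ∃ k : ℕ, k < 4 * N ∧ ∃ β : ℝ,
      ∀ ρ : ℝ × ℝ → ℝ × ℝ,
        (ρ = fun w => (w.1 * Real.cos β - w.2 * Real.sin β,
                        w.1 * Real.sin β + w.2 * Real.cos β)) →
      ∀ F E : Set (ℝ × ℝ),
        F = ρ '' {w ∈ F₀ | w.1 ^ 2 + w.2 ^ 2 ≤ 1 ∧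
          α w ∈ Set.Ico ((k : ℝ) * π / (4 * N)) (((k : ℝ) + 1) * π / (4 * N))} →
        E = ρ '' E₀ →
        volume E = 0 ∧ ENNReal.ofReal (π / (4 * N)) ≤ volume F ∧
        ∃ γ : ℝ × ℝ → ℝ, ∀ w ∈ F,
          γ w ∈ Set.Ico ((1 - 1 / (N : ℝ)) * (π / 4)) (π / 4) ∧
          ∀ r : ℝ, r ≠ 0 → w + r • (Real.cos (γ w), Real.sin (γ w)) ∈ E := by
  have hN0 : 0 < 4 * N := by omega
  have hdisk : volume (F₀ ∩ unitDisk) = ENNReal.ofReal π := by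
    rw [measure_inter_eq_of_subset_of_measure_eq hF₀sub (hF₀meas.trans volume_Icc_neg_one_one.symm)
      (by simp [volume_Icc_neg_one_one]) measurableSet_unitDisk,
      inter_eq_right.2 unitDisk_subset_Icc, volume_unitDisk]
  have hcover : F₀ ∩ unitDisk ⊆ ⋃ k ∈ Finset.range (4 * N), {w ∈ F₀ | w.1 ^ 2 + w.2 ^ 2 ≤ 1 ∧
      α w ∈ Set.Ico ((k : ℝ) * π / (4 * N)) (((k : ℝ) + 1) * π / (4 * N))} := by
    rintro w ⟨hwF, hwD⟩
    obtain ⟨k, hk, hkα⟩ := exists_lt_mem_Ico_mul_div pi_pos hN0 (hαrange w hwF)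
    exact mem_biUnion (Finset.mem_range.2 hk) ⟨hwF, hwD, by exact_mod_cast hkα⟩
  obtain ⟨k, hk, hSk⟩ := exists_measure_div_card_le_of_subset_biUnion (μ := volume)
    (Finset.nonempty_range_iff.2 hN0.ne') hcover
  set β := π / 4 - ((k : ℝ) + 1) * π / (4 * N) with hβ
  refine ⟨k, Finset.mem_range.1 hk, β, ?_⟩
  rintro ρ rfl F E rfl rfl
  rw [← coe_planeRotation]
  refine ⟨by rw [volume_image_planeRotation, hE₀], ?_, fun w => α (planeRotation (-β) w) + β, ?_⟩
  · rw [volume_image_planeRotation]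
    refine le_trans (le_of_eq ?_) hSk
    rw [hdisk, Finset.card_range, ENNReal.ofReal_div_of_pos (by positivity)]
    norm_cast
  · rintro _ ⟨v, ⟨hvF, -, hvα⟩, rfl⟩
    simp only [planeRotation_neg_planeRotation]
    refine ⟨?_, fun r hr => ⟨_, hline v hvF r hr, ?_⟩⟩
    · have hN' : (N : ℝ) ≠ 0 := by positivity
      have hlow : (1 - 1 / (N : ℝ)) * (π / 4) = k * π / (4 * N) + β := by
        rw [hβ]; field_simp; ring
      constructor <;> linarith [hvα.1, hvα.2]
    · rw [map_add, map_smul, planeRotation_cos_sin]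

/-- Nikodym-type configuration after pigeonholing and rotation: given a set `F₀ ⊆ [-1,1]²`
of full measure `4`, a null set `E₀`, and a measurable direction function
`α : ℝ² → [0,π)` such that for every `w ∈ F₀` the line through `w` in direction `α(w)`,
minus `{w}`, lies in `E₀`, there exist `k ∈ {0,…,4N−1}` and a rotation `ρ` (by angle `β`)
such that the set `F = ρ(F̃_k)` has measure at least `π/(4N)`, `E = ρ(E₀)` is null, and
for every `w ∈ F` there is a line through `w` with direction angle
`γ(w) ∈ [(1−1/N)π/4, π/4)` whose complement of `{w}` lies in `E`. -/
theorem nikodym_pigeonhole (N : ℕ) (hN : 6 ≤ N)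
    (F₀ E₀ : Set (ℝ × ℝ)) (hF₀sub : F₀ ⊆ Set.Icc (-1, -1) (1, 1))
    (hF₀meas : volume F₀ = 4) (hE₀ : volume E₀ = 0)
    (α : ℝ × ℝ → ℝ) (hαmeas : Measurable α)
    (hαrange : ∀ w ∈ F₀, α w ∈ Set.Ico 0 π)
    (hline : ∀ w ∈ F₀, ∀ r : ℝ, r ≠ 0 →
      w + r • (Real.cos (α w), Real.sin (α w)) ∈ E₀) :
    ∃ k : ℕ, k < 4 * N ∧ ∃ β : ℝ,
      ∀ ρ : ℝ × ℝ → ℝ × ℝ,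
        (ρ = fun w => (w.1 * Real.cos β - w.2 * Real.sin β,
                        w.1 * Real.sin β + w.2 * Real.cos β)) →
      ∀ F E : Set (ℝ × ℝ),
        F = ρ '' {w ∈ F₀ | w.1 ^ 2 + w.2 ^ 2 ≤ 1 ∧
          α w ∈ Set.Ico ((k : ℝ) * π / (4 * N)) (((k : ℝ) + 1) * π / (4 * N))} →
        E = ρ '' E₀ →
        volume E = 0 ∧ ENNReal.ofReal (π / (4 * N)) ≤ volume F ∧
        ∃ γ : ℝ × ℝ → ℝ, ∀ w ∈ F,
          γ w ∈ Set.Ico ((1 - 1 / (N : ℝ)) * (π / 4)) (π / 4) ∧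
          ∀ r : ℝ, r ≠ 0 → w + r • (Real.cos (γ w), Real.sin (γ w)) ∈ E :=
  nikodym_pigeonhole_general N hN F₀ E₀ hF₀sub hF₀meas hE₀ α hαrange hline
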